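/- Let W = U Σ V^T be a singular value decomposition of W ∈ ℝ^{N×N} and let τ > 0. Then Z* = U S_τ(Σ) V^T, where S_τ(Σ) replaces each singular value σ_i by max(σ_i − τ, 0), is a minimizer of h(Z) = τ ‖Z‖_* + (1/2) ‖Z − W‖_F². -/

import Mathlib

/-!
With `d = max (σ - τ) 0` and `a = min σ τ`, the residual `W - Z*` equals `U diag(a) Vᵀ`, a matrix of
operator norm at most `τ`. Trace duality between the operator and nuclear norms (Cauchy–Schwarz
on the columns of an eigenbasis of `ZᵀZ`) gives `⟪W - Z*, Z⟫ ≤ τ‖Z‖_*` for every `Z`, with equality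
at `Z = Z*` because `a i * d i = τ * d i`. So `W - Z*` is a subgradient of `τ‖·‖_*` at `Z*`, which
is the optimality condition of the proximal problem: expanding `‖Z - W‖_F²` around `Z*` leaves
`½‖Z - Z*‖_F² ≥ 0`.
-/

open Matrix

/-- Squared Frobenius norm of a matrix. -/
def frobSq {m n : ℕ} (A : Matrix (Fin m) (Fin n) ℝ) : ℝ := ∑ i, ∑ j, (A i j) ^ 2

/-- Nuclear norm: the sum of the singular values. -/
noncomputable def nuclearNorm {N : ℕ} (Z : Matrix (Fin N) (Fin N) ℝ) : ℝ :=
  ∑ i, Real.sqrt ((Matrix.isHermitian_iff_isSymm.mpr (Matrix.isSymm_transpose_mul_self Z)).eigenvalues i)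

namespace Matrix

section

variable {m n p R : Type*} [Fintype n] [CommRing R]

theorem mulVec_dotProduct_mulVec [Fintype m] (A : Matrix m n R) (x y : n → R) :
    (A *ᵥ x) ⬝ᵥ (A *ᵥ y) = x ⬝ᵥ ((Aᵀ * A) *ᵥ y) := by
  rw [dotProduct_mulVec, ← vecMul_transpose A x, vecMul_vecMul, dotProduct_mulVec]

theorem mul_diagonal_mul_transpose_transpose_mul [Fintype m] [DecidableEq n] {U : Matrix m n R}
    (hU : Uᵀ * U = 1) (V : Matrix p n R) (a b : n → R) :
    (U * diagonal a * Vᵀ)ᵀ * (U * diagonal b * Vᵀ) = V * diagonal (a * b) * Vᵀ := by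
  simp only [transpose_mul, transpose_transpose, diagonal_transpose]
  calc V * (diagonal a * Uᵀ) * (U * diagonal b * Vᵀ)
      = V * (diagonal a * (Uᵀ * U) * diagonal b) * Vᵀ := by simp only [Matrix.mul_assoc]
    _ = V * diagonal (a * b) * Vᵀ := by rw [hU, Matrix.mul_one, diagonal_mul_diagonal]; rfl

theorem trace_mul_diagonal_mul_transpose [DecidableEq n] {V : Matrix n n R} (hV : Vᵀ * V = 1)
    (c : n → R) : trace (V * diagonal c * Vᵀ) = ∑ i, c i := by
  rw [trace_mul_comm, ← Matrix.mul_assoc, hV, Matrix.one_mul, trace_diagonal]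

theorem trace_transpose_mul_eq_sum_dotProduct [Fintype m] [DecidableEq n] (A B : Matrix m n R)
    {Q : Matrix n n R} (hQ : Q * Qᵀ = 1) : trace (Aᵀ * B) = ∑ k, (A *ᵥ Qᵀ k) ⬝ᵥ (B *ᵥ Qᵀ k) := by
  calc trace (Aᵀ * B) = trace ((A * Q)ᵀ * (B * Q)) := by
        rw [transpose_mul, Matrix.mul_assoc, trace_mul_comm Qᵀ, Matrix.mul_assoc,
          Matrix.mul_assoc, hQ, Matrix.mul_one]
    _ = ∑ k, (A *ᵥ Qᵀ k) ⬝ᵥ (B *ᵥ Qᵀ k) := by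
        simp only [trace, diag, mul_apply, mulVec, dotProduct, transpose_apply]

theorem dotProduct_le_sqrt_mul_sqrt (v w : n → ℝ) : v ⬝ᵥ w ≤ √(v ⬝ᵥ v) * √(w ⬝ᵥ w) := by
  simpa only [dotProduct, sq] using Real.sum_mul_le_sqrt_mul_sqrt Finset.univ v w

theorem mul_diagonal_mul_transpose_mulVec_dotProduct_le [Fintype m] [DecidableEq n]
    {U : Matrix m n ℝ} {V : Matrix n n ℝ} (hU : Uᵀ * U = 1) (hV : Vᵀ * V = 1) {a : n → ℝ}
    {τ : ℝ} (ha : ∀ i, |a i| ≤ τ) (x : n → ℝ) :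
    ((U * diagonal a * Vᵀ) *ᵥ x) ⬝ᵥ ((U * diagonal a * Vᵀ) *ᵥ x) ≤ τ ^ 2 * (x ⬝ᵥ x) := by
  set y := Vᵀ *ᵥ x
  have hy : y ⬝ᵥ y = x ⬝ᵥ x := by
    rw [mulVec_dotProduct_mulVec, transpose_transpose, mul_eq_one_comm.mp hV, one_mulVec]
  calc ((U * diagonal a * Vᵀ) *ᵥ x) ⬝ᵥ ((U * diagonal a * Vᵀ) *ᵥ x)
      = (diagonal a *ᵥ y) ⬝ᵥ (diagonal a *ᵥ y) := by
        rw [← mulVec_mulVec, ← mulVec_mulVec, mulVec_dotProduct_mulVec, hU, one_mulVec]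
    _ = ∑ i, a i ^ 2 * y i ^ 2 := by
        simp only [dotProduct, mulVec_diagonal]; ring_nf
    _ ≤ ∑ i, τ ^ 2 * y i ^ 2 := by
        refine Finset.sum_le_sum fun i _ => mul_le_mul_of_nonneg_right ?_ (sq_nonneg _)
        exact sq_le_sq' (abs_le.mp (ha i)).1 (abs_le.mp (ha i)).2
    _ = τ ^ 2 * (x ⬝ᵥ x) := by
        rw [← Finset.mul_sum, ← hy]; simp only [dotProduct, sq]

theorem isHermitian_transpose_mul_self (Z : Matrix n n ℝ) :
    (Zᵀ * Z).IsHermitian :=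
  isHermitian_iff_isSymm.mpr (isSymm_transpose_mul_self Z)

theorem mulVec_eigenvectorBasis_dotProduct_self [DecidableEq n]
    (Z : Matrix n n ℝ) (k : n) :
    (Z *ᵥ ⇑((isHermitian_transpose_mul_self Z).eigenvectorBasis k)) ⬝ᵥ
        (Z *ᵥ ⇑((isHermitian_transpose_mul_self Z).eigenvectorBasis k)) =
      (isHermitian_transpose_mul_self Z).eigenvalues k := by
  set hZ := isHermitian_transpose_mul_self Z
  have hunit : ⇑(hZ.eigenvectorBasis k) ⬝ᵥ ⇑(hZ.eigenvectorBasis k) = 1 := by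
    have hinner : inner ℝ (hZ.eigenvectorBasis k) (hZ.eigenvectorBasis k) = 1 := by
      rw [real_inner_self_eq_norm_sq, hZ.eigenvectorBasis.orthonormal.1 k, one_pow]
    rw [EuclideanSpace.inner_eq_star_dotProduct] at hinner
    simpa using hinner
  rw [mulVec_dotProduct_mulVec, hZ.mulVec_eigenvectorBasis, dotProduct_smul, hunit, smul_eq_mul,
    mul_one]

theorem IsHermitian.sum_comp_eigenvalues_of_charpoly_eq [DecidableEq n]
    {A : Matrix n n ℝ} (hA : A.IsHermitian) {d : n → ℝ} (h : A.charpoly = (diagonal d).charpoly)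
    (g : ℝ → ℝ) : ∑ i, g (hA.eigenvalues i) = ∑ i, g (d i) := by
  have hroots : Finset.univ.val.map hA.eigenvalues = Finset.univ.val.map d := by
    have hdiag : (diagonal d).charpoly.roots = Finset.univ.val.map d := by
      rw [charpoly_diagonal, Polynomial.roots_prod _ _
        (Finset.prod_ne_zero_iff.mpr fun i _ => Polynomial.X_sub_C_ne_zero _)]
      simp
    simpa [h, hdiag] using hA.roots_charpoly_eq_eigenvalues.symm
  simpa only [Finset.sum_eq_multiset_sum, Multiset.map_map, Function.comp_def] using
    congrArg (fun s => (s.map g).sum) hroots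

end

end Matrix

theorem nuclearNorm_eq_sum_sqrt_eigenvalues {N : ℕ} (Z : Matrix (Fin N) (Fin N) ℝ) :
    nuclearNorm Z = ∑ i, √((isHermitian_transpose_mul_self Z).eigenvalues i) :=
  rfl

theorem nuclearNorm_mul_diagonal_mul_transpose {N : ℕ} {U V : Matrix (Fin N) (Fin N) ℝ}
    (hU : Uᵀ * U = 1) (hV : Vᵀ * V = 1) (d : Fin N → ℝ) :
    nuclearNorm (U * diagonal d * Vᵀ) = ∑ i, |d i| := by
  have hcharpoly : ((U * diagonal d * Vᵀ)ᵀ * (U * diagonal d * Vᵀ)).charpoly =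
      (diagonal (d * d)).charpoly := by
    rw [mul_diagonal_mul_transpose_transpose_mul hU, Matrix.mul_assoc, charpoly_mul_comm,
      Matrix.mul_assoc, hV, Matrix.mul_one]
  rw [nuclearNorm_eq_sum_sqrt_eigenvalues,
    IsHermitian.sum_comp_eigenvalues_of_charpoly_eq _ hcharpoly]
  simp only [Pi.mul_apply, Real.sqrt_mul_self_eq_abs]

theorem trace_transpose_mul_le_nuclearNorm {N : ℕ} (G Z : Matrix (Fin N) (Fin N) ℝ) {τ : ℝ}
    (hτ : 0 ≤ τ) (hG : ∀ x, (G *ᵥ x) ⬝ᵥ (G *ᵥ x) ≤ τ ^ 2 * (x ⬝ᵥ x)) :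
    trace (Gᵀ * Z) ≤ τ * nuclearNorm Z := by
  set hZ := isHermitian_transpose_mul_self Z
  set Q : Matrix (Fin N) (Fin N) ℝ := ↑hZ.eigenvectorUnitary
  have hQ : Q * Qᵀ = 1 := by
    simpa [star_eq_conjTranspose] using mem_unitaryGroup_iff.mp hZ.eigenvectorUnitary.2
  have hcol : ∀ k, Qᵀ k ⬝ᵥ Qᵀ k = 1 := fun k => by
    have hQ' : Qᵀ * Q = 1 := mul_eq_one_comm.mp hQ
    simpa [mul_apply, dotProduct] using congrFun (congrFun hQ' k) k
  rw [trace_transpose_mul_eq_sum_dotProduct G Z hQ, nuclearNorm_eq_sum_sqrt_eigenvalues,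
    Finset.mul_sum]
  refine Finset.sum_le_sum fun k _ => ?_
  calc (G *ᵥ Qᵀ k) ⬝ᵥ (Z *ᵥ Qᵀ k)
      ≤ √((G *ᵥ Qᵀ k) ⬝ᵥ (G *ᵥ Qᵀ k)) * √((Z *ᵥ Qᵀ k) ⬝ᵥ (Z *ᵥ Qᵀ k)) :=
        dotProduct_le_sqrt_mul_sqrt _ _
    _ ≤ √(τ ^ 2) * √(hZ.eigenvalues k) := by
        gcongr
        · simpa only [hcol, mul_one] using hG (Qᵀ k)
        · exact (mulVec_eigenvectorBasis_dotProduct_self Z k).le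
    _ = τ * √(hZ.eigenvalues k) := by rw [Real.sqrt_sq hτ]

theorem frobSq_eq_trace {m n : ℕ} (A : Matrix (Fin m) (Fin n) ℝ) : frobSq A = trace (Aᵀ * A) := by
  simp only [frobSq, trace, diag, mul_apply, transpose_apply, sq]
  exact Finset.sum_comm

theorem frobSq_nonneg {m n : ℕ} (A : Matrix (Fin m) (Fin n) ℝ) : 0 ≤ frobSq A :=
  Finset.sum_nonneg fun _ _ => Finset.sum_nonneg fun _ _ => sq_nonneg _

theorem frobSq_add {m n : ℕ} (A B : Matrix (Fin m) (Fin n) ℝ) :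
    frobSq (A + B) = frobSq A + 2 * trace (Bᵀ * A) + frobSq B := by
  have hsymm : trace (Aᵀ * B) = trace (Bᵀ * A) := by
    rw [← trace_transpose, transpose_mul, transpose_transpose]
  simp only [frobSq_eq_trace, transpose_add, Matrix.add_mul, Matrix.mul_add, trace_add, hsymm]
  ring

theorem add_half_frobSq_le_of_subgradient {m n : ℕ} (p : Matrix (Fin m) (Fin n) ℝ → ℝ)
    {W X : Matrix (Fin m) (Fin n) ℝ} (Z : Matrix (Fin m) (Fin n) ℝ)
    (hX : p X + trace ((W - X)ᵀ * (Z - X)) ≤ p Z) :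
    p X + 1 / 2 * frobSq (X - W) ≤ p Z + 1 / 2 * frobSq (Z - W) := by
  have hcross : trace ((X - W)ᵀ * (Z - X)) = - trace ((W - X)ᵀ * (Z - X)) := by
    rw [← neg_sub W X, transpose_neg, Matrix.neg_mul, trace_neg]
  rw [show Z - W = (Z - X) + (X - W) by abel, frobSq_add, hcross]
  linarith [frobSq_nonneg (Z - X)]

theorem svt_minimizer (N : ℕ) (W U V : Matrix (Fin N) (Fin N) ℝ)
    (hU : Uᵀ * U = 1) (hV : Vᵀ * V = 1) (σ : Fin N → ℝ) (hσ : ∀ i, 0 ≤ σ i)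
    (hW : W = U * Matrix.diagonal σ * Vᵀ) (τ : ℝ) (hτ : 0 < τ) :
    ∀ Z : Matrix (Fin N) (Fin N) ℝ,
      τ * nuclearNorm (U * Matrix.diagonal (fun i => max (σ i - τ) 0) * Vᵀ) +
        (1 / 2) * frobSq ((U * Matrix.diagonal (fun i => max (σ i - τ) 0) * Vᵀ) - W)
      ≤ τ * nuclearNorm Z + (1 / 2) * frobSq (Z - W) := by
  intro Z
  set d : Fin N → ℝ := fun i => max (σ i - τ) 0
  set a : Fin N → ℝ := fun i => min (σ i) τ
  have hresidual : W - U * diagonal d * Vᵀ = U * diagonal a * Vᵀ := by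
    rw [hW, ← Matrix.sub_mul, ← Matrix.mul_sub, diagonal_sub]
    congr 3
    funext i
    show σ i - max (σ i - τ) 0 = min (σ i) τ
    grind
  have hattain : trace ((U * diagonal a * Vᵀ)ᵀ * (U * diagonal d * Vᵀ)) =
      τ * nuclearNorm (U * diagonal d * Vᵀ) := by
    rw [mul_diagonal_mul_transpose_transpose_mul hU, trace_mul_diagonal_mul_transpose hV,
      nuclearNorm_mul_diagonal_mul_transpose hU hV, Finset.mul_sum]
    refine Finset.sum_congr rfl fun i _ => ?_
    show min (σ i) τ * max (σ i - τ) 0 = τ * |max (σ i - τ) 0|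
    rw [abs_of_nonneg (le_max_right _ _)]
    grind
  have hdual : trace ((U * diagonal a * Vᵀ)ᵀ * Z) ≤ τ * nuclearNorm Z :=
    trace_transpose_mul_le_nuclearNorm _ Z hτ.le
      (mul_diagonal_mul_transpose_mulVec_dotProduct_le hU hV fun i => by
        rw [abs_of_nonneg (le_min (hσ i) hτ.le)]; exact min_le_right _ _)
  refine add_half_frobSq_le_of_subgradient (fun Z => τ * nuclearNorm Z) Z ?_
  rw [hresidual, Matrix.mul_sub, trace_sub, hattain]
  linarith
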